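/- As formal power series, ∑_{n≥0} p̄(n) (−q)ⁿ = 1/φ(q), where φ(q) = ∑_{n∈ℤ} q^{n²}. -/

import Mathlib

open PowerSeries

noncomputable def f (m : ℕ) : PowerSeries ℚ :=
  PowerSeries.mk fun n => PowerSeries.coeff (R := ℚ) n
    (∏ k ∈ Finset.range (n + 1), (1 - (PowerSeries.X : PowerSeries ℚ) ^ (m * (k + 1))))

/-- `phi j` is the theta series `φ(q^j) = ∑_{m ∈ ℤ} q^{j m²}`: the `n`-th
coefficient is the number of integers `m` with `j·m² = n`. -/
noncomputable def phi (j : ℕ) : PowerSeries ℚ :=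
  PowerSeries.mk fun n =>
    ((((Finset.Icc (-(n : ℤ)) (n : ℤ))).filter fun m => (j : ℤ) * m ^ 2 = (n : ℤ)).card : ℚ)


/-!
Replacing `q` by `-q` turns the claim into Gauss's identity `φ(q) f₂ = f₁(-q)²`, where
`f₁(-q) = (-q; q²)_∞ (q²; q²)_∞`. This is the limit `n → ∞` of the finite Jacobi triple product
`∑_{|j| ≤ n} [2n, n + j]_{q²} q^{j²} = (-q; q²)_n²`, which is the q-binomial theorem applied to
`∏_{k < 2n} (q^{2n} + q^{2k+1})`. The limit is taken coefficientwise: modulo `q^{2(n - |j|) + 2}`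
the Gaussian binomial `[2n, n + j]_{q²}` agrees with `1 / (q²; q²)_n`.
-/

open Finset

section CommSemiring

variable {R : Type*} [CommSemiring R]

def qBinomial (q : R) : ℕ → ℕ → R
  | _, 0 => 1
  | 0, _ + 1 => 0
  | m + 1, r + 1 => q ^ (r + 1) * qBinomial q m (r + 1) + qBinomial q m r

@[simp] theorem qBinomial_zero_right (q : R) (m : ℕ) : qBinomial q m 0 = 1 := by
  cases m <;> rfl

theorem qBinomial_succ_succ (q : R) (m r : ℕ) :
    qBinomial q (m + 1) (r + 1) = q ^ (r + 1) * qBinomial q m (r + 1) + qBinomial q m r := rfl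

theorem qBinomial_eq_zero_of_lt (q : R) {m r : ℕ} (h : m < r) : qBinomial q m r = 0 := by
  induction m generalizing r with
  | zero => obtain ⟨r, rfl⟩ := Nat.exists_eq_add_one_of_ne_zero h.ne'; rfl
  | succ m ih =>
    obtain ⟨r, rfl⟩ := Nat.exists_eq_add_one_of_ne_zero (by omega : r ≠ 0)
    rw [qBinomial_succ_succ, ih (by omega), ih (by omega), mul_zero, add_zero]

theorem prod_add_mul_pow_eq_sum_qBinomial (q x y : R) (m : ℕ) :
    ∏ k ∈ range m, (y + x * q ^ k) =
      ∑ r ∈ range (m + 1), qBinomial q m r * q ^ r.choose 2 * x ^ r * y ^ (m - r) := by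
  induction m generalizing x with
  | zero => simp
  | succ m ih =>
    have hshift : ∀ k, y + x * q ^ (k + 1) = y + x * q * q ^ k := fun k => by ring
    have hchoose : ∀ r, (r + 1).choose 2 = r.choose 2 + r := fun r => by
      rw [Nat.choose_succ_succ', Nat.choose_one_right, add_comm]
    have hy : y * ∑ r ∈ range (m + 1), qBinomial q m r * q ^ r.choose 2 * (x * q) ^ r * y ^ (m - r)
        = y ^ (m + 1) + ∑ r ∈ range (m + 1), q ^ (r + 1) * qBinomial q m (r + 1) *
            q ^ (r + 1).choose 2 * x ^ (r + 1) * y ^ (m - r) := by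
      rw [sum_range_succ' _ m, sum_range_succ _ m, qBinomial_eq_zero_of_lt q (Nat.lt_succ_self m),
        mul_add, mul_sum]
      simp only [qBinomial_zero_right, Nat.choose_zero_succ, pow_zero, mul_one, one_mul,
        Nat.sub_zero, mul_zero, zero_mul, add_zero, ← pow_succ']
      rw [add_comm]
      congr 1
      refine sum_congr rfl fun r hr => ?_
      have : m - r = m - (r + 1) + 1 := by rw [mem_range] at hr; omega
      rw [this, hchoose]
      ring
    have hx : x * ∑ r ∈ range (m + 1), qBinomial q m r * q ^ r.choose 2 * (x * q) ^ r * y ^ (m - r)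
        = ∑ r ∈ range (m + 1),
            qBinomial q m r * q ^ (r + 1).choose 2 * x ^ (r + 1) * y ^ (m - r) := by
      rw [mul_sum]
      refine sum_congr rfl fun r _ => ?_
      rw [hchoose]
      ring
    rw [prod_range_succ', prod_congr rfl fun k _ => hshift k, ih, pow_zero, mul_one, mul_comm,
      add_mul, hy, hx, sum_range_succ' _ (m + 1)]
    simp only [qBinomial_succ_succ, add_mul, sum_add_distrib, Nat.add_sub_add_right,
      qBinomial_zero_right, Nat.choose_zero_succ, pow_zero, mul_one, Nat.sub_zero]
    ring

theorem prod_range_two_mul_pow_add_pow (t : R) (n : ℕ) :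
    ∏ k ∈ range (2 * n), (t ^ (2 * n) + t * (t ^ 2) ^ k) =
      t ^ (3 * n ^ 2) * (∏ k ∈ range n, (1 + t ^ (2 * k + 1))) ^ 2 := by
  have hodd : ∀ m, ∑ k ∈ range m, (2 * k + 1) = m ^ 2 := fun m => by
    induction m with
    | zero => rfl
    | succ m ih => rw [sum_range_succ, ih]; ring
  have hlow : ∏ k ∈ range n, (t ^ (2 * n) + t * (t ^ 2) ^ k) =
      t ^ (n ^ 2) * ∏ k ∈ range n, (1 + t ^ (2 * k + 1)) :=
    calc ∏ k ∈ range n, (t ^ (2 * n) + t * (t ^ 2) ^ k)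
        = ∏ k ∈ range n, (t ^ (2 * k + 1) * (1 + t ^ (2 * (n - 1 - k) + 1))) :=
          prod_congr rfl fun k hk => by
            have : 2 * n = 2 * k + 1 + (2 * (n - 1 - k) + 1) := by rw [mem_range] at hk; omega
            rw [this, pow_add, ← pow_mul, pow_succ']
            ring
      _ = t ^ (n ^ 2) * ∏ k ∈ range n, (1 + t ^ (2 * k + 1)) := by
          rw [prod_mul_distrib, prod_pow_eq_pow_sum, hodd,
            prod_range_reflect (fun k => 1 + t ^ (2 * k + 1))]
  have hhigh : ∏ k ∈ range n, (t ^ (2 * n) + t * (t ^ 2) ^ (n + k)) =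
      t ^ (2 * n * n) * ∏ k ∈ range n, (1 + t ^ (2 * k + 1)) :=
    calc ∏ k ∈ range n, (t ^ (2 * n) + t * (t ^ 2) ^ (n + k))
        = ∏ k ∈ range n, (t ^ (2 * n) * (1 + t ^ (2 * k + 1))) :=
          prod_congr rfl fun k _ => by ring
      _ = t ^ (2 * n * n) * ∏ k ∈ range n, (1 + t ^ (2 * k + 1)) := by
          rw [prod_mul_distrib, prod_const, card_range, ← pow_mul]
  rw [two_mul n, prod_range_add, ← two_mul, hlow, hhigh]
  ring

theorem sum_Icc_neg_eq_sum_range {M : Type*} [AddCommMonoid M] (g : ℤ → M) (n : ℕ) :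
    ∑ j ∈ Icc (-n : ℤ) n, g j = ∑ r ∈ range (2 * n + 1), g (r - n) := by
  refine sum_nbij' (fun j => (n + j).toNat) (fun r => (r : ℤ) - n) ?_ ?_ ?_ ?_ ?_ <;>
    intro a ha <;> simp only [mem_range, mem_Icc] at ha
  · simp only [mem_range]; omega
  · simp only [mem_Icc]; omega
  · omega
  · omega
  · rw [show ((n + a).toNat : ℤ) - n = a by omega]

theorem sum_Icc_qBinomial_mul_pow_sq {t : R} (ht : IsLeftRegular t) (n : ℕ) :
    ∑ j ∈ Icc (-n : ℤ) n, qBinomial (t ^ 2) (2 * n) (n + j).toNat * t ^ (j.natAbs ^ 2) =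
      (∏ k ∈ range n, (1 + t ^ (2 * k + 1))) ^ 2 := by
  have hexp : ∀ r ∈ range (2 * n + 1),
      2 * r.choose 2 + (r + 2 * n * (2 * n - r)) = 3 * n ^ 2 + ((r : ℤ) - n).natAbs ^ 2 := by
    intro r hr
    rw [mem_range] at hr
    qify [show r ≤ 2 * n by omega]
    rw [Nat.cast_choose_two, sq_abs]
    ring
  refine ht.pow (3 * n ^ 2) ?_
  dsimp only
  rw [← prod_range_two_mul_pow_add_pow, prod_add_mul_pow_eq_sum_qBinomial, sum_Icc_neg_eq_sum_range,
    mul_sum]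
  refine sum_congr rfl fun r hr => ?_
  rw [show ((n : ℤ) + (r - n)).toNat = r by omega, ← pow_mul, ← pow_mul, mul_assoc, mul_assoc,
    ← pow_add, ← pow_add, hexp r hr, pow_add]
  ring

end CommSemiring

section CommRing

variable {R S : Type*} [CommRing R] [CommRing S]

/-- `qPochhammer q n` is `(q; q)_n`. -/
def qPochhammer (q : R) (n : ℕ) : R := ∏ i ∈ range n, (1 - q ^ (i + 1))

theorem qPochhammer_succ (q : R) (n : ℕ) :
    qPochhammer q (n + 1) = qPochhammer q n * (1 - q ^ (n + 1)) :=
  prod_range_succ _ _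

theorem map_qPochhammer (g : R →+* S) (q : R) (n : ℕ) :
    g (qPochhammer q n) = qPochhammer (g q) n := by
  simp [qPochhammer, map_prod]

theorem qBinomial_mul_qPochhammer_mul_qPochhammer (q : R) {m r : ℕ} (h : r ≤ m) :
    qBinomial q m r * qPochhammer q r * qPochhammer q (m - r) = qPochhammer q m := by
  induction m generalizing r with
  | zero =>
    obtain rfl : r = 0 := by omega
    simp [qPochhammer]
  | succ m ih =>
    rcases r with _ | r
    · simp [qPochhammer]
    rw [qBinomial_succ_succ, qPochhammer_succ, qPochhammer_succ, Nat.add_sub_add_right]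
    rcases Nat.lt_or_eq_of_le (Nat.le_of_succ_le_succ h) with hr | rfl
    · obtain ⟨d, rfl⟩ := Nat.exists_eq_add_of_lt hr
      have ih₁ := ih (r := r) (by omega)
      have ih₂ := ih (r := r + 1) (by omega)
      rw [show r + d + 1 - r = d + 1 by omega, qPochhammer_succ] at ih₁ ⊢
      rw [show r + d + 1 - (r + 1) = d by omega, qPochhammer_succ] at ih₂
      linear_combination (q ^ (r + 1) * (1 - q ^ (d + 1))) * ih₂ + (1 - q ^ (r + 1)) * ih₁
    · have ih₁ := ih (r := r) le_rfl
      rw [Nat.sub_self] at ih₁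
      rw [qBinomial_eq_zero_of_lt q (Nat.lt_succ_self r), Nat.sub_self]
      linear_combination (1 - q ^ (r + 1)) * ih₁

theorem qPochhammer_neg_two_mul (q : R) (n : ℕ) :
    qPochhammer (-q) (2 * n) = (∏ k ∈ range n, (1 + q ^ (2 * k + 1))) * qPochhammer (q ^ 2) n := by
  induction n with
  | zero => simp [qPochhammer]
  | succ n ih =>
    rw [show 2 * (n + 1) = 2 * n + 1 + 1 by ring, qPochhammer_succ, qPochhammer_succ, ih,
      prod_range_succ, qPochhammer_succ, Odd.neg_pow ⟨n, by ring⟩, Even.neg_pow ⟨n + 1, by ring⟩,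
      ← pow_mul]
    ring

theorem qPochhammer_smodEq (q : R) {k n : ℕ} (h : k ≤ n) :
    qPochhammer q n ≡ qPochhammer q k [SMOD Ideal.span {q ^ (k + 1)}] := by
  rw [qPochhammer, qPochhammer, ← prod_range_mul_prod_Ico _ h]
  have hIco :
      ∏ i ∈ Ico k n, (1 - q ^ (i + 1)) ≡ ∏ _i ∈ Ico k n, 1 [SMOD Ideal.span {q ^ (k + 1)}] :=
    SModEq.prod fun i hi => by
      rw [SModEq.sub_mem, Ideal.mem_span_singleton, sub_sub_cancel_left, dvd_neg]
      exact pow_dvd_pow q (by rw [mem_Ico] at hi; omega)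
  simpa using SModEq.mul SModEq.rfl hIco

theorem IsNilpotent.isUnit_qPochhammer {q : R} (hq : IsNilpotent q) (n : ℕ) :
    IsUnit (qPochhammer q n) :=
  IsUnit.prod_iff.mpr fun i _ => (hq.pow_succ i).isUnit_one_sub

theorem qPochhammer_mul_qBinomial_smodEq_one (q : R) {m r n k : ℕ} (hrm : r ≤ m) (hkr : k ≤ r)
    (hkmr : k ≤ m - r) (hkn : k ≤ n) :
    qPochhammer q n * qBinomial q m r ≡ 1 [SMOD Ideal.span {q ^ (k + 1)}] := by
  set I := Ideal.span {q ^ (k + 1)}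
  have hnil : IsNilpotent (Ideal.Quotient.mk I q) :=
    ⟨k + 1, by
      rw [← map_pow, Ideal.Quotient.eq_zero_iff_mem]; exact Ideal.mem_span_singleton_self _⟩
  have hunit : IsUnit (Ideal.Quotient.mk I (qPochhammer q r * qPochhammer q (m - r))) := by
    rw [map_mul, map_qPochhammer, map_qPochhammer]
    exact (hnil.isUnit_qPochhammer r).mul (hnil.isUnit_qPochhammer (m - r))
  have hcross :
      qPochhammer q n * qPochhammer q m ≡ qPochhammer q r * qPochhammer q (m - r) [SMOD I] :=
    calc qPochhammer q n * qPochhammer q m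
        ≡ qPochhammer q k * qPochhammer q k [SMOD I] :=
          (qPochhammer_smodEq q hkn).mul (qPochhammer_smodEq q (hkr.trans hrm))
      _ ≡ qPochhammer q r * qPochhammer q (m - r) [SMOD I] :=
          ((qPochhammer_smodEq q hkr).mul (qPochhammer_smodEq q hkmr)).symm
  rw [SModEq.idealQuotientMk] at hcross ⊢
  refine hunit.mul_right_cancel ?_
  rw [← map_mul, ← map_mul, one_mul, ← hcross, ← qBinomial_mul_qPochhammer_mul_qPochhammer q hrm]
  congr 1
  ring

end CommRing

namespace PowerSeries

variable {R : Type*} [CommRing R]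

theorem smodEq_X_pow_iff {f g : R⟦X⟧} {n : ℕ} :
    f ≡ g [SMOD Ideal.span {X ^ n}] ↔ ∀ i < n, coeff i f = coeff i g := by
  simp only [SModEq.sub_mem, Ideal.mem_span_singleton, X_pow_dvd_iff, map_sub, sub_eq_zero]

theorem eq_of_forall_smodEq_X_pow {f g : R⟦X⟧} (h : ∀ n, f ≡ g [SMOD Ideal.span {X ^ n}]) :
    f = g :=
  ext fun n => smodEq_X_pow_iff.mp (h (n + 1)) n n.lt_succ_self

theorem X_pow_natAbs_sq_smodEq {N : ℕ} {j : ℤ} (hj : j ∈ Icc (-N : ℤ) N) :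
    X ^ (j.natAbs ^ 2) ≡ qPochhammer (X ^ 2 : R⟦X⟧) N *
      (qBinomial (X ^ 2) (2 * N) (N + j).toNat * X ^ (j.natAbs ^ 2)) [SMOD Ideal.span {X ^ N}] := by
  rw [mem_Icc] at hj
  have key := qPochhammer_mul_qBinomial_smodEq_one (X ^ 2 : R⟦X⟧) (m := 2 * N) (r := (N + j).toNat)
    (n := N) (k := N - j.natAbs) (by omega) (by omega) (by omega) (by omega)
  rw [SModEq.sub_mem, Ideal.mem_span_singleton] at key ⊢
  have hmod : X ^ N ∣ X ^ (j.natAbs ^ 2) * (X ^ 2 : R⟦X⟧) ^ (N - j.natAbs + 1) := by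
    rw [← pow_mul, ← pow_add]
    exact pow_dvd_pow X (by have := Nat.le_self_pow two_ne_zero j.natAbs; omega)
  refine hmod.trans ?_
  rw [show ∀ a c b : R⟦X⟧, b - a * (c * b) = b * -(a * c - 1) from fun a c b => by ring]
  exact mul_dvd_mul_left _ (dvd_neg.mpr key)

end PowerSeries

theorem coeff_f {m b n : ℕ} (hm : 0 < m) (hb : b < n) :
    coeff b (f m) = coeff b (qPochhammer (X ^ m : ℚ⟦X⟧) n) := by
  have hf : coeff b (f m) = coeff b (qPochhammer (X ^ m : ℚ⟦X⟧) (b + 1)) := by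
    simp only [f, coeff_mk, qPochhammer, pow_mul]
  have h := qPochhammer_smodEq (X ^ m : ℚ⟦X⟧) (Nat.succ_le_of_lt hb)
  rw [← pow_mul, smodEq_X_pow_iff] at h
  rw [hf, h b (by nlinarith)]

theorem constantCoeff_f {m : ℕ} (hm : 0 < m) : constantCoeff (f m) = 1 := by
  rw [← coeff_zero_eq_constantCoeff_apply, coeff_f hm one_pos]
  simp [qPochhammer, zero_pow hm.ne']

theorem constantCoeff_phi_one : constantCoeff (phi 1) = 1 := by
  rw [phi, constantCoeff_mk]
  decide

theorem rescale_neg_one_f_two : rescale (-1 : ℚ) (f 2) = f 2 := by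
  ext n
  rw [coeff_rescale, coeff_f two_pos n.lt_succ_self, ← coeff_rescale, map_qPochhammer, map_pow,
    rescale_neg_one_X, neg_sq]

theorem phi_one_smodEq (n : ℕ) :
    phi 1 ≡ ∑ j ∈ Icc (-n : ℤ) n, (X : ℚ⟦X⟧) ^ (j.natAbs ^ 2) [SMOD Ideal.span {X ^ n}] := by
  rw [smodEq_X_pow_iff]
  intro i hi
  simp only [phi, coeff_mk, map_sum, coeff_X_pow, sum_boole]
  congr 2
  ext m
  simp only [mem_filter, mem_Icc, Nat.cast_one, one_mul]
  have hsq : m ^ 2 = i ↔ i = m.natAbs ^ 2 := by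
    rw [← Int.natAbs_sq m, eq_comm]; norm_cast
  have hle := Nat.le_self_pow two_ne_zero m.natAbs
  rw [hsq]
  constructor <;> rintro ⟨_, rfl⟩ <;> exact ⟨by omega, rfl⟩

theorem phi_one_mul_f_two : phi 1 * f 2 = rescale (-1 : ℚ) (f 1) ^ 2 := by
  refine eq_of_forall_smodEq_X_pow fun N => ?_
  have hf₂ : f 2 ≡ qPochhammer (X ^ 2) N [SMOD Ideal.span {X ^ N}] :=
    smodEq_X_pow_iff.mpr fun b hb => coeff_f two_pos hb
  have hf₁ : rescale (-1 : ℚ) (f 1) ≡ qPochhammer (-X) (2 * N) [SMOD Ideal.span {X ^ N}] :=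
    smodEq_X_pow_iff.mpr fun b hb => by
      rw [coeff_rescale, coeff_f one_pos (by omega : b < 2 * N), pow_one, ← coeff_rescale,
        map_qPochhammer, rescale_neg_one_X]
  have htheta := sum_Icc_qBinomial_mul_pow_sq (IsRegular.of_ne_zero (X_ne_zero (R := ℚ))).left N
  calc phi 1 * f 2
      ≡ (∑ j ∈ Icc (-N : ℤ) N, (X : ℚ⟦X⟧) ^ (j.natAbs ^ 2)) * qPochhammer (X ^ 2) N
          [SMOD Ideal.span {X ^ N}] := SModEq.mul (phi_one_smodEq N) hf₂
    _ ≡ (∑ j ∈ Icc (-N : ℤ) N, qPochhammer (X ^ 2) N *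
          (qBinomial (X ^ 2) (2 * N) (N + j).toNat * X ^ (j.natAbs ^ 2))) * qPochhammer (X ^ 2) N
          [SMOD Ideal.span {X ^ N}] :=
        SModEq.mul (SModEq.sum fun j hj => X_pow_natAbs_sq_smodEq hj) SModEq.rfl
    _ = qPochhammer (-X) (2 * N) ^ 2 := by
        rw [← mul_sum, htheta, qPochhammer_neg_two_mul]
        ring
    _ ≡ rescale (-1 : ℚ) (f 1) ^ 2 [SMOD Ideal.span {X ^ N}] := (hf₁.pow 2).symm

/-- $\sum_{n\ge 0} \bar p(n)(-q)^n = 1/\varphi(q)$. -/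
theorem overpartition_neg_q_inv_phi
    (p : ℕ → ℕ)
    (hp : PowerSeries.mk (fun n => (p n : ℚ)) = f 2 * ((f 1) ^ 2)⁻¹) :
    PowerSeries.mk (fun n => ((-1 : ℚ)) ^ n * (p n : ℚ)) = (phi 1)⁻¹ := by
  have hf₁ : constantCoeff (f 1 ^ 2) ≠ 0 := by simp [constantCoeff_f one_pos]
  have hf₂ : f 2 ≠ 0 := fun h => by simpa [h] using constantCoeff_f two_pos
  have hP : mk (fun n => (p n : ℚ)) * f 1 ^ 2 = f 2 := by
    rw [hp, mul_assoc, PowerSeries.inv_mul_cancel _ hf₁, mul_one]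
  rw [← rescale_mk, PowerSeries.eq_inv_iff_mul_eq_one (by simp [constantCoeff_phi_one])]
  refine mul_left_cancel₀ hf₂ ?_
  calc f 2 * (rescale (-1 : ℚ) (mk fun n => (p n : ℚ)) * phi 1)
      = rescale (-1 : ℚ) (mk fun n => (p n : ℚ)) * (phi 1 * f 2) := by ring
    _ = rescale (-1 : ℚ) (f 2) := by rw [phi_one_mul_f_two, ← map_pow, ← map_mul, hP]
    _ = f 2 * 1 := by rw [rescale_neg_one_f_two, mul_one]
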